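/- arXiv:2309.11403 — 3 statements merged into one kernel-verified Lean document; each statement's English description precedes it below -/
import Mathlib

section
/- Let d ≥ 1, k ≥ 2, and let N be a quantum channel on d×d complex matrices, i.e. N(X) = Σᵢ Eᵢ X Eᵢ† for a finite family of d×d matrices Eᵢ with Σᵢ Eᵢ†Eᵢ = I. Let H be a Hermitian d^k×d^k matrix satisfying tr[H · ρ^{⊗k}] = tr[ρ^k] for every density matrix ρ on ℂ^d. If there exists a Hermitian-preserving ℂ-linear map D on d^k×d^k matrices (i.e. D(A†) = D(A)† for every A) such that tr[H · D(N^{⊗k}(ρ^{⊗k}))] = tr[ρ^k] for every density matrix ρ on ℂ^d, then N is bijective as a linear map on d×d matrices. (This is the 'only if' direction of the theorem: the k-th moment can be retrieved from noisy states only if the noise channel is invertible.) -/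
/-!
If `N` kills a nonzero matrix, it kills a nonzero Hermitian `W`, since `N` commutes with `ᴴ`,
and `W` is traceless, since `N` preserves traces. For small real `t`, `ρₜ = I/d + t W` is then a
density matrix with `N ρₜ = N ρ₀`, so `N^{⊗k}(ρₜ^{⊗k})`, and with it `tr ρₜ^k`, does not depend
on `t`. But `tr ρₜ^k` is a polynomial in `t` whose `t²`-coefficient `(k choose 2) d^{2-k} tr W²`
is nonzero.
-/

open Matrix BigOperators ComplexOrder

/-- The Kronecker product `A₁ ⊗ ⋯ ⊗ A_k` of a family of `d × d` matrices. -/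
noncomputable def kronMap {d k : ℕ} (A : Fin k → Matrix (Fin d) (Fin d) ℂ) :
    Matrix (Fin k → Fin d) (Fin k → Fin d) ℂ :=
  Matrix.of fun a b => ∏ j, A j (a j) (b j)

/-- The `k`-fold Kronecker power `ρ^{⊗k}`. -/
noncomputable def kronPow {d : ℕ} (ρ : Matrix (Fin d) (Fin d) ℂ) (k : ℕ) :
    Matrix (Fin k → Fin d) (Fin k → Fin d) ℂ :=
  kronMap fun _ => ρ

open Polynomial Filter Topology

namespace Matrix

variable {n : Type*} [Fintype n]

section Kraus

variable {R ι m : Type*} [Fintype ι] [CommSemiring R] [StarRing R]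

theorem conjTranspose_sum_mul_mul_conjTranspose (E : ι → Matrix m n R) (X : Matrix n n R) :
    (∑ i, E i * X * (E i)ᴴ)ᴴ = ∑ i, E i * Xᴴ * (E i)ᴴ := by
  simp only [conjTranspose_sum, conjTranspose_mul, conjTranspose_conjTranspose, Matrix.mul_assoc]

theorem trace_sum_mul_mul_conjTranspose [Fintype m] [DecidableEq n] {E : ι → Matrix m n R}
    (hE : ∑ i, (E i)ᴴ * E i = 1) (X : Matrix n n R) :
    (∑ i, E i * X * (E i)ᴴ).trace = X.trace := by
  rw [trace_sum, Finset.sum_congr rfl fun i _ => trace_mul_cycle (E i) X (E i)ᴴ, ← trace_sum,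
    ← Finset.sum_mul, hE, Matrix.one_mul]

end Kraus

variable [DecidableEq n]

section TracePowLine

variable {R : Type*} [CommRing R]

/-- `t ↦ tr((a • 1 + t • W) ^ k)`, expanded by the binomial theorem. -/
noncomputable def tracePowLine (a : R) (W : Matrix n n R) (k : ℕ) : R[X] :=
  ∑ j ∈ Finset.range (k + 1), C (k.choose j * a ^ (k - j) * (W ^ j).trace) * X ^ j

theorem eval_tracePowLine (a t : R) (W : Matrix n n R) (k : ℕ) :
    (tracePowLine a W k).eval t = ((a • 1 + t • W) ^ k).trace := by
  have hcomm : Commute (t • W) (a • (1 : Matrix n n R)) :=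
    ((Commute.one_right W).smul_right a).smul_left t
  rw [add_comm, hcomm.add_pow, trace_sum, tracePowLine, eval_finsetSum]
  refine Finset.sum_congr rfl fun j _ => ?_
  simp only [eval_mul, eval_C, eval_pow, eval_X, _root_.smul_pow, one_pow]
  conv_rhs => rw [← Nat.cast_comm, ← nsmul_eq_mul]
  rw [trace_smul, Matrix.mul_smul, Matrix.mul_one, smul_smul, trace_smul, smul_eq_mul,
    nsmul_eq_mul]
  ring

theorem coeff_tracePowLine (a : R) (W : Matrix n n R) {k j : ℕ} (hj : j ≤ k) :
    (tracePowLine a W k).coeff j = k.choose j * a ^ (k - j) * (W ^ j).trace := by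
  simp only [tracePowLine, finsetSum_coeff, coeff_C_mul_X_pow, Finset.sum_ite_eq,
    Finset.mem_range, Nat.lt_succ_of_le hj, if_true]

end TracePowLine

open Unitary in
theorem IsHermitian.posSemidef_smul_one_add_smul {W : Matrix n n ℂ} (hW : W.IsHermitian)
    {a t : ℝ} (h : ∀ i, 0 ≤ a + t * hW.eigenvalues i) :
    ((a : ℂ) • 1 + (t : ℂ) • W).PosSemidef := by
  have hdiag : (a : ℂ) • 1 + (t : ℂ) • W = conjStarAlgAut ℂ _ hW.eigenvectorUnitary
      (diagonal fun i => ((a + t * hW.eigenvalues i : ℝ) : ℂ)) := by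
    conv_lhs => rw [hW.spectral_theorem]
    rw [← map_one (conjStarAlgAut ℂ _ hW.eigenvectorUnitary), ← map_smul, ← map_smul, ← map_add]
    congr 1
    ext i j
    by_cases hij : i = j <;> simp [hij]
  rw [hdiag, conjStarAlgAut_apply, isUnit_coe.posSemidef_star_right_conjugate_iff,
    posSemidef_diagonal_iff]
  exact fun i => Complex.zero_le_real.2 (h i)

theorem IsHermitian.eventually_posSemidef_smul_one_add_smul {W : Matrix n n ℂ}
    (hW : W.IsHermitian) {a : ℝ} (ha : 0 < a) :
    ∀ᶠ t : ℝ in 𝓝 0, ((a : ℂ) • 1 + (t : ℂ) • W).PosSemidef := by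
  refine (eventually_all.2 fun i => ?_).mono fun t => hW.posSemidef_smul_one_add_smul
  have : Continuous fun t : ℝ => a + t * hW.eigenvalues i := by fun_prop
  exact (this.tendsto' 0 a (by simp)).eventually (eventually_ge_nhds ha)

end Matrix

theorem Polynomial.coeff_eq_zero_of_eventually_eval_eq {p : ℂ[X]}
    (h : ∀ᶠ t : ℝ in 𝓝 0, p.eval (t : ℂ) = p.eval 0) {j : ℕ} (hj : j ≠ 0) : p.coeff j = 0 := by
  have hinf : {z : ℂ | p.eval z = (C (p.eval 0)).eval z}.Infinite := by
    refine ((infinite_of_mem_nhds 0 h).image Complex.ofReal_injective.injOn).mono ?_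
    rintro _ ⟨t, ht, rfl⟩
    simpa using ht
  rw [eq_of_infinite_eval_eq p _ hinf, coeff_C, if_neg hj]

theorem LinearMap.exists_isHermitian_ne_zero_map_eq_zero {n m : Type*} [Fintype n]
    {Φ : Matrix n n ℂ →ₗ[ℂ] Matrix m m ℂ} (hΦ : ∀ X, Φ Xᴴ = (Φ X)ᴴ)
    (hinj : ¬ Function.Injective Φ) : ∃ W : Matrix n n ℂ, W.IsHermitian ∧ W ≠ 0 ∧ Φ W = 0 := by
  obtain ⟨X, hX, hX0⟩ : ∃ X, Φ X = 0 ∧ X ≠ 0 := by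
    simpa [injective_iff_map_eq_zero] using hinj
  by_contra! hW
  have hXH : Φ Xᴴ = 0 := by rw [hΦ, hX, conjTranspose_zero]
  have hre : X + Xᴴ = 0 := by
    by_contra hre
    refine hW _ ?_ hre (by rw [map_add, hX, hXH, add_zero])
    rw [IsHermitian, conjTranspose_add, conjTranspose_conjTranspose, add_comm]
  have him : Complex.I • (X - Xᴴ) = 0 := by
    by_contra him
    refine hW _ ?_ him (by rw [map_smul, map_sub, hX, hXH, sub_zero, smul_zero])
    rw [IsHermitian, conjTranspose_smul, conjTranspose_sub, conjTranspose_conjTranspose,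
      Complex.star_def, Complex.conj_I]
    module
  refine hX0 (smul_right_injective _ (two_ne_zero (α := ℂ)) ?_)
  calc (2 : ℂ) • X = (X + Xᴴ) + (-Complex.I) • (Complex.I • (X - Xᴴ)) := by
        rw [smul_smul, neg_mul, Complex.I_mul_I, neg_neg, one_smul]; module
    _ = (2 : ℂ) • 0 := by rw [hre, him]; simp

theorem LinearMap.injective_of_trace_pow_determined {n : Type*} [Fintype n] [DecidableEq n]
    [Nonempty n] {k : ℕ} (hk : 2 ≤ k) (Φ : Matrix n n ℂ →ₗ[ℂ] Matrix n n ℂ)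
    (hHP : ∀ X, Φ Xᴴ = (Φ X)ᴴ) (hTP : ∀ X, (Φ X).trace = X.trace)
    (hdet : ∀ ρ σ : Matrix n n ℂ, ρ.PosSemidef → ρ.trace = 1 → σ.PosSemidef → σ.trace = 1 →
      Φ ρ = Φ σ → (ρ ^ k).trace = (σ ^ k).trace) :
    Function.Injective Φ := by
  by_contra hΦ
  obtain ⟨W, hWH, hW0, hΦW⟩ := exists_isHermitian_ne_zero_map_eq_zero hHP hΦ
  set a : ℝ := (Fintype.card n : ℝ)⁻¹
  have ha : 0 < a := inv_pos.2 (Nat.cast_pos.2 Fintype.card_pos)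
  have htr : ∀ t : ℝ, ((a : ℂ) • 1 + (t : ℂ) • W).trace = 1 := fun t => by
    have htrW : W.trace = 0 := by rw [← hTP, hΦW, trace_zero]
    simp [trace_add, trace_smul, htrW, a, Fintype.card_ne_zero]
  have hpsd := hWH.eventually_posSemidef_smul_one_add_smul ha
  have hconst : ∀ᶠ t : ℝ in 𝓝 0,
      (tracePowLine (a : ℂ) W k).eval (t : ℂ) = (tracePowLine (a : ℂ) W k).eval ((0 : ℝ) : ℂ) := by
    filter_upwards [hpsd] with t ht
    rw [eval_tracePowLine, eval_tracePowLine]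
    exact hdet _ _ ht (htr t) hpsd.self_of_nhds (htr 0) (by simp [hΦW])
  have h2 := Polynomial.coeff_eq_zero_of_eventually_eval_eq (by simpa using hconst) two_ne_zero
  rw [coeff_tracePowLine _ _ hk] at h2
  have hchoose : (k.choose 2 : ℂ) ≠ 0 := Nat.cast_ne_zero.2 (Nat.choose_pos hk).ne'
  have hW2 : (Wᴴ * W).trace = 0 := by
    rw [hWH.eq, ← sq]
    simpa [hchoose, ha.ne'] using h2
  exact hW0 (trace_conjTranspose_mul_self_eq_zero_iff.1 hW2)

theorem channel_bijective_of_moment_retrievable_general (d k : ℕ) (hd : 1 ≤ d) (hk : 2 ≤ k)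
    (N : Matrix (Fin d) (Fin d) ℂ →ₗ[ℂ] Matrix (Fin d) (Fin d) ℂ)
    (m : ℕ) (E : Fin m → Matrix (Fin d) (Fin d) ℂ)
    (hKraus : ∀ X, N X = ∑ i, E i * X * (E i)ᴴ)
    (hTP : ∑ i, (E i)ᴴ * E i = 1)
    (H : Matrix (Fin k → Fin d) (Fin k → Fin d) ℂ)
    (Nk D : Matrix (Fin k → Fin d) (Fin k → Fin d) ℂ →ₗ[ℂ]
      Matrix (Fin k → Fin d) (Fin k → Fin d) ℂ)
    (hNk : ∀ A : Fin k → Matrix (Fin d) (Fin d) ℂ,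
      Nk (kronMap A) = kronMap fun j => N (A j))
    (hret : ∀ ρ : Matrix (Fin d) (Fin d) ℂ, ρ.PosSemidef → ρ.trace = 1 →
      (H * D (Nk (kronPow ρ k))).trace = (ρ ^ k).trace) :
    Function.Bijective ⇑N := by
  have : Nonempty (Fin d) := ⟨⟨0, hd⟩⟩
  have hinj : Function.Injective N := by
    refine N.injective_of_trace_pow_determined hk (fun X => ?_) (fun X => ?_)
      fun ρ σ hρ hρ1 hσ hσ1 hNρσ => ?_
    · rw [hKraus, hKraus, conjTranspose_sum_mul_mul_conjTranspose]
    · rw [hKraus, trace_sum_mul_mul_conjTranspose hTP]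
    · rw [← hret ρ hρ hρ1, ← hret σ hσ hσ1]
      simp only [kronPow, hNk, hNρσ]
  exact ⟨hinj, LinearMap.injective_iff_surjective.mp hinj⟩

/-- 'only if' direction: let `N` be a quantum channel on `d × d` matrices with
Kraus operators `E i` (`N(X) = Σᵢ Eᵢ X Eᵢ†`, `Σᵢ Eᵢ†Eᵢ = I`), let `H` be a Hermitian
`d^k × d^k` matrix with `tr[H · ρ^{⊗k}] = tr[ρ^k]` for all density matrices `ρ`, and let `Nk`
be the `k`-fold tensor power `N^{⊗k}`.  If some Hermitian-preserving linear map `D` satisfies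
`tr[H · D(N^{⊗k}(ρ^{⊗k}))] = tr[ρ^k]` for every density matrix `ρ`, then `N` is bijective. -/
theorem channel_bijective_of_moment_retrievable (d k : ℕ) (hd : 1 ≤ d) (hk : 2 ≤ k)
    (N : Matrix (Fin d) (Fin d) ℂ →ₗ[ℂ] Matrix (Fin d) (Fin d) ℂ)
    (m : ℕ) (E : Fin m → Matrix (Fin d) (Fin d) ℂ)
    (hKraus : ∀ X, N X = ∑ i, E i * X * (E i)ᴴ)
    (hTP : ∑ i, (E i)ᴴ * E i = 1)
    (H : Matrix (Fin k → Fin d) (Fin k → Fin d) ℂ) (hH : H.IsHermitian)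
    (hmomH : ∀ ρ : Matrix (Fin d) (Fin d) ℂ, ρ.PosSemidef → ρ.trace = 1 →
      (H * kronPow ρ k).trace = (ρ ^ k).trace)
    (Nk D : Matrix (Fin k → Fin d) (Fin k → Fin d) ℂ →ₗ[ℂ]
      Matrix (Fin k → Fin d) (Fin k → Fin d) ℂ)
    (hNk : ∀ A : Fin k → Matrix (Fin d) (Fin d) ℂ,
      Nk (kronMap A) = kronMap fun j => N (A j))
    (hHP : ∀ A, D Aᴴ = (D A)ᴴ)
    (hret : ∀ ρ : Matrix (Fin d) (Fin d) ℂ, ρ.PosSemidef → ρ.trace = 1 →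
      (H * D (Nk (kronPow ρ k))).trace = (ρ ^ k).trace) :
    Function.Bijective ⇑N :=
  channel_bijective_of_moment_retrievable_general d k hd hk N m E hKraus hTP H Nk D hNk hret
end

section
/- Let X, Y, Z be the 2×2 Pauli matrices, G = X⊗X + Y⊗Y + Z⊗Z, and H = (I₄ + G)/2 the swap operator on ℂ²⊗ℂ². For ε ∈ [0,1), let N_ε be the qubit depolarizing channel N_ε(ρ) = (1−ε)ρ + ε·tr(ρ)·I₂/2, and define the linear map C on 4×4 complex matrices by C(σ) = (1/4)·tr(σ)·I₄ + (1/12)·tr(σ·G)·G. Then for every density matrix ρ on ℂ², tr[ρ²] = (1/(1−ε)²)·tr[H · C(N_ε(ρ) ⊗ N_ε(ρ))] − (1−(1−ε)²)/(2(1−ε)²). -/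
open Matrix BigOperators Kronecker ComplexOrder

/-- Pauli X. -/
noncomputable def PX : Matrix (Fin 2) (Fin 2) ℂ := !![0, 1; 1, 0]
/-- Pauli Y. -/
noncomputable def PY : Matrix (Fin 2) (Fin 2) ℂ := !![0, -Complex.I; Complex.I, 0]
/-- Pauli Z. -/
noncomputable def PZ : Matrix (Fin 2) (Fin 2) ℂ := !![1, 0; 0, -1]

/-- `G = X⊗X + Y⊗Y + Z⊗Z`. -/
noncomputable def Gop : Matrix (Fin 2 × Fin 2) (Fin 2 × Fin 2) ℂ :=
  PX ⊗ₖ PX + PY ⊗ₖ PY + PZ ⊗ₖ PZ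

/-- The swap operator `H = (I₄ + G)/2` on `ℂ² ⊗ ℂ²`. -/
noncomputable def Hswap : Matrix (Fin 2 × Fin 2) (Fin 2 × Fin 2) ℂ :=
  (1 / 2 : ℂ) • (1 + Gop)

/-- The qubit depolarizing channel `N_ε(ρ) = (1−ε)ρ + ε·tr(ρ)·I₂/2`. -/
noncomputable def Ndep (ε : ℝ) (ρ : Matrix (Fin 2) (Fin 2) ℂ) : Matrix (Fin 2) (Fin 2) ℂ :=
  ((1 - ε : ℝ) : ℂ) • ρ + ((ε / 2 : ℝ) : ℂ) • ρ.trace • (1 : Matrix (Fin 2) (Fin 2) ℂ)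

/-- The retriever `C(σ) = (1/4)·tr(σ)·I₄ + (1/12)·tr(σ·G)·G`. -/
noncomputable def Cdep (σ : Matrix (Fin 2 × Fin 2) (Fin 2 × Fin 2) ℂ) :
    Matrix (Fin 2 × Fin 2) (Fin 2 × Fin 2) ℂ :=
  (1 / 4 : ℂ) • σ.trace • (1 : Matrix (Fin 2 × Fin 2) (Fin 2 × Fin 2) ℂ)
    + (1 / 12 : ℂ) • (σ * Gop).trace • Gop


set_option maxHeartbeats 1600000 in
lemma trace_key0 (N : Matrix (Fin 2) (Fin 2) ℂ) :
    (Hswap * Cdep (N ⊗ₖ N)).trace = (N * N).trace := by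
  simp only [Hswap, Cdep, Gop, PX, PY, PZ, Matrix.trace, Matrix.mul_apply,
    Fintype.sum_prod_type, Fin.sum_univ_two, Matrix.kroneckerMap_apply,
    Matrix.add_apply, Matrix.smul_apply, Matrix.one_apply, Matrix.cons_val', Matrix.cons_val_zero,
    Matrix.cons_val_one, Matrix.head_cons, Matrix.head_fin_const, Matrix.empty_val',
    Matrix.cons_val_fin_one, Matrix.of_apply, smul_eq_mul, Prod.mk.injEq, Matrix.diag]
  norm_num
  ring

lemma trace_key (ε : ℝ) (ρ : Matrix (Fin 2) (Fin 2) ℂ) (hρ1 : ρ.trace = 1) :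
    (Hswap * Cdep (Ndep ε ρ ⊗ₖ Ndep ε ρ)).trace
      = ((1 - ε : ℝ) : ℂ) ^ 2 * (ρ ^ 2).trace + ((ε * (2 - ε) / 2 : ℝ) : ℂ) := by
  rw [trace_key0]
  have expand : Ndep ε ρ * Ndep ε ρ
      = (((1 - ε : ℝ) : ℂ) * ((1 - ε : ℝ) : ℂ)) • (ρ * ρ)
        + (2 * ((1 - ε : ℝ) : ℂ) * ((ε / 2 : ℝ) : ℂ)) • ρ
        + (((ε / 2 : ℝ) : ℂ) * ((ε / 2 : ℝ) : ℂ)) • (1 : Matrix (Fin 2) (Fin 2) ℂ) := by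
    simp only [Ndep, hρ1, one_smul]
    ext i j
    fin_cases i <;> fin_cases j <;>
      simp [Matrix.mul_apply, Matrix.one_apply, Fin.sum_univ_two, Matrix.add_apply,
        Matrix.smul_apply, smul_eq_mul] <;> ring
  rw [expand]
  simp only [Matrix.trace_add, Matrix.trace_smul, hρ1, pow_two, smul_eq_mul,
    Matrix.trace_one]
  push_cast
  simp only [Fintype.card_fin]
  push_cast
  ring

/-- for every `ε ∈ [0,1)` and every density matrix `ρ` on `ℂ²`,
`tr[ρ²] = (1/(1−ε)²)·tr[H · C(N_ε(ρ) ⊗ N_ε(ρ))] − (1−(1−ε)²)/(2(1−ε)²)`. -/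
theorem secondMoment_retriever_depolarizing (ε : ℝ) (hε : 0 ≤ ε) (hε1 : ε < 1)
    (ρ : Matrix (Fin 2) (Fin 2) ℂ) (hρ : ρ.PosSemidef) (hρ1 : ρ.trace = 1) :
    (ρ ^ 2).trace
      = ((1 / (1 - ε) ^ 2 : ℝ) : ℂ) * (Hswap * Cdep (Ndep ε ρ ⊗ₖ Ndep ε ρ)).trace
        - (((1 - (1 - ε) ^ 2) / (2 * (1 - ε) ^ 2) : ℝ) : ℂ) := by
  have key := trace_key ε ρ hρ1
  rw [key]
  have h1 : (1 - (ε : ℂ)) ≠ 0 := by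
    intro h
    have : (ε : ℂ) = 1 := by linear_combination -h
    have : ε = 1 := by exact_mod_cast this
    linarith
  push_cast
  field_simp
  ring
end

section
/- Let n ≥ 1 and d = 2^n. Let S be the swap operator on ℂ^d⊗ℂ^d (S(u⊗v) = v⊗u), which equals (1/d)·Σ_P P⊗P where the sum ranges over all 4^n n-qubit Pauli strings P, so that Σ_{P≠I} P⊗P = d·S − I_{d²}. For ε ∈ [0,1), let N_ε be the depolarizing channel N_ε(ρ) = (1−ε)ρ + ε·tr(ρ)·I_d/d, and define the linear map C on d²×d² complex matrices by C(σ) = (1/d²)·tr(σ)·I_{d²} + (1/(d²(d²−1)))·tr[σ·(d·S − I_{d²})]·(d·S − I_{d²}). Then for every density matrix ρ on ℂ^d, tr[ρ²] = (1/(1−ε)²)·tr[S · C(N_ε(ρ) ⊗ N_ε(ρ))] − (1−(1−ε)²)/(d·(1−ε)²). -/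
open Matrix BigOperators Kronecker ComplexOrder

/-- The swap operator on `ℂ^d ⊗ ℂ^d`, `S(u⊗v) = v⊗u`. -/
noncomputable def swapOp (d : ℕ) : Matrix (Fin d × Fin d) (Fin d × Fin d) ℂ :=
  Matrix.of fun p q => if p.1 = q.2 ∧ p.2 = q.1 then 1 else 0

/-- The `d`-dimensional depolarizing channel `N_ε(ρ) = (1−ε)ρ + ε·tr(ρ)·I_d/d`. -/
noncomputable def NdepD (d : ℕ) (ε : ℝ) (ρ : Matrix (Fin d) (Fin d) ℂ) :
    Matrix (Fin d) (Fin d) ℂ :=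
  ((1 - ε : ℝ) : ℂ) • ρ + ((ε / d : ℝ) : ℂ) • ρ.trace • (1 : Matrix (Fin d) (Fin d) ℂ)

/-- `Σ_{P≠I} P⊗P = d·S − I_{d²}` (the traceless part of the Pauli two-design sum). -/
noncomputable def GD (d : ℕ) : Matrix (Fin d × Fin d) (Fin d × Fin d) ℂ :=
  (d : ℂ) • swapOp d - 1

/-- The retriever `C(σ) = (1/d²)·tr(σ)·I_{d²} + (1/(d²(d²−1)))·tr[σ(dS−I)]·(dS−I)`. -/
noncomputable def CdepD (d : ℕ) (σ : Matrix (Fin d × Fin d) (Fin d × Fin d) ℂ) :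
    Matrix (Fin d × Fin d) (Fin d × Fin d) ℂ :=
  ((((d : ℝ) ^ 2)⁻¹ : ℝ) : ℂ) • σ.trace • (1 : Matrix (Fin d × Fin d) (Fin d × Fin d) ℂ)
    + ((((d : ℝ) ^ 2 * ((d : ℝ) ^ 2 - 1))⁻¹ : ℝ) : ℂ) • (σ * GD d).trace • GD d

/-!
The retriever is designed so that `tr[S · C(σ)] = tr[S σ]` for every `σ`: this only uses
`S² = 1` and `tr S = d`, whence `tr[S (dS − I)] = d(d² − 1)`. For a product state,
`tr[S (A ⊗ B)] = tr[AB]`, so the right-hand side reduces to `tr[N_ε(ρ)²]`, which for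
`tr ρ = 1` equals `(1−ε)² tr[ρ²] + (1 − (1−ε)²)/d`.
-/

lemma swapOp_mul_self (d : ℕ) : swapOp d * swapOp d = 1 := by
  ext p q
  simp only [Matrix.mul_apply, swapOp, Matrix.of_apply, Fintype.sum_prod_type, ite_and,
    Matrix.one_apply]
  by_cases h1 : p.1 = q.1 <;> by_cases h2 : p.2 = q.2 <;>
    simp [h1, h2, Prod.ext_iff, eq_comm]

lemma trace_swapOp_mul_kronecker {d : ℕ} (A B : Matrix (Fin d) (Fin d) ℂ) :
    (swapOp d * (A ⊗ₖ B)).trace = (A * B).trace := by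
  simp only [Matrix.trace, Matrix.diag, Matrix.mul_apply, swapOp, Matrix.of_apply,
    kroneckerMap_apply, Fintype.sum_prod_type, ite_and, ite_mul, one_mul, zero_mul,
    Finset.sum_ite_eq, Finset.mem_univ, if_true]
  rw [Finset.sum_comm]

lemma trace_swapOp (d : ℕ) : (swapOp d).trace = d := by
  simpa [one_kronecker_one] using trace_swapOp_mul_kronecker (1 : Matrix (Fin d) (Fin d) ℂ) 1

lemma swapOp_eq_one_of_subsingleton (d : ℕ) [Subsingleton (Fin d)] : swapOp d = 1 := by
  ext p q
  rw [Subsingleton.elim p q]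
  simp [swapOp, Subsingleton.elim q.1 q.2]

lemma trace_swapOp_mul_GD (d : ℕ) : (swapOp d * GD d).trace = d * (d ^ 2 - 1) := by
  rw [GD, Matrix.mul_sub, Matrix.mul_smul, swapOp_mul_self, Matrix.mul_one, trace_sub,
    trace_smul, trace_one, trace_swapOp, smul_eq_mul, Fintype.card_prod, Fintype.card_fin]
  push_cast
  ring

lemma trace_mul_GD {d : ℕ} (σ : Matrix (Fin d × Fin d) (Fin d × Fin d) ℂ) :
    (σ * GD d).trace = d * (swapOp d * σ).trace - σ.trace := by
  rw [GD, Matrix.mul_sub, Matrix.mul_smul, Matrix.mul_one, trace_sub, trace_smul,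
    trace_mul_comm, smul_eq_mul]

lemma trace_swapOp_mul_CdepD {d : ℕ} (σ : Matrix (Fin d × Fin d) (Fin d × Fin d) ℂ) :
    (swapOp d * CdepD d σ).trace = (swapOp d * σ).trace := by
  rcases Nat.lt_or_ge d 2 with hd | hd
  · -- for `d = 1` the second coefficient of the retriever is `0⁻¹ = 0`, and `S = 1`
    have : Subsingleton (Fin d) := Fin.subsingleton_iff_le_one.mpr (by omega)
    rw [swapOp_eq_one_of_subsingleton, Matrix.one_mul, Matrix.one_mul, CdepD]
    interval_cases d <;> simp [GD, swapOp_eq_one_of_subsingleton]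
  · have hd0 : (d : ℂ) ≠ 0 := by positivity
    have hd1 : (d : ℂ) ^ 2 - 1 ≠ 0 := by
      rw [sub_ne_zero]; exact_mod_cast (Nat.one_lt_pow two_ne_zero hd).ne'
    rw [CdepD, Matrix.mul_add, Matrix.mul_smul, Matrix.mul_smul, Matrix.mul_smul,
      Matrix.mul_smul, Matrix.mul_one, trace_add, trace_smul, trace_smul, trace_smul, trace_smul,
      trace_swapOp, trace_swapOp_mul_GD, trace_mul_GD]
    simp only [smul_eq_mul]
    push_cast
    field_simp
    ring

lemma trace_NdepD_sq (d : ℕ) (ε : ℝ) (ρ : Matrix (Fin d) (Fin d) ℂ) :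
    (NdepD d ε ρ ^ 2).trace
      = ((1 - ε) ^ 2 : ℂ) * (ρ ^ 2).trace + ((1 - (1 - ε) ^ 2) / d : ℂ) * ρ.trace ^ 2 := by
  simp only [NdepD, sq, Matrix.add_mul, Matrix.mul_add, Matrix.smul_mul, Matrix.mul_smul,
    Matrix.mul_one, Matrix.one_mul, trace_add, trace_smul, trace_one, smul_eq_mul,
    Fintype.card_fin]
  push_cast
  rcases eq_or_ne (d : ℂ) 0 with hd | hd
  · simp [hd]
    ring
  · field_simp
    ring

theorem secondMoment_retriever_depolarizing_nqubit_general (n : ℕ)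
    (ε : ℝ) (hε1 : ε < 1)
    (ρ : Matrix (Fin (2 ^ n)) (Fin (2 ^ n)) ℂ) (hρ1 : ρ.trace = 1) :
    (ρ ^ 2).trace
      = ((1 / (1 - ε) ^ 2 : ℝ) : ℂ) *
          (swapOp (2 ^ n) * CdepD (2 ^ n) (NdepD (2 ^ n) ε ρ ⊗ₖ NdepD (2 ^ n) ε ρ)).trace
        - (((1 - (1 - ε) ^ 2) / ((2 ^ n : ℝ) * (1 - ε) ^ 2) : ℝ) : ℂ) := by
  have hε : (1 - ε : ℂ) ≠ 0 := by exact_mod_cast (sub_pos.mpr hε1).ne'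
  rw [trace_swapOp_mul_CdepD, trace_swapOp_mul_kronecker, ← sq, trace_NdepD_sq, hρ1]
  push_cast
  field_simp
  ring

/-- for `n ≥ 1` qubits (`d = 2^n`), `ε ∈ [0,1)` and every density matrix `ρ`
on `ℂ^d`, `tr[ρ²] = (1/(1−ε)²)·tr[S · C(N_ε(ρ)⊗N_ε(ρ))] − (1−(1−ε)²)/(d(1−ε)²)`. -/
theorem secondMoment_retriever_depolarizing_nqubit (n : ℕ) (hn : 1 ≤ n)
    (ε : ℝ) (hε : 0 ≤ ε) (hε1 : ε < 1)
    (ρ : Matrix (Fin (2 ^ n)) (Fin (2 ^ n)) ℂ) (hρ : ρ.PosSemidef) (hρ1 : ρ.trace = 1) :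
    (ρ ^ 2).trace
      = ((1 / (1 - ε) ^ 2 : ℝ) : ℂ) *
          (swapOp (2 ^ n) * CdepD (2 ^ n) (NdepD (2 ^ n) ε ρ ⊗ₖ NdepD (2 ^ n) ε ρ)).trace
        - (((1 - (1 - ε) ^ 2) / ((2 ^ n : ℝ) * (1 - ε) ^ 2) : ℝ) : ℂ) :=
  secondMoment_retriever_depolarizing_nqubit_general n ε hε1 ρ hρ1
end
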